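/- arXiv:2212.13770 — 2 statements merged into one kernel-verified Lean document; each statement's English description precedes it below -/
import Mathlib

section
/- Let G be a finite group and N a nontrivial proper normal subgroup of G. Then ψ''(G) < ψ''(G/N), where ψ''(G) = ψ(G)/|G|^2 and ψ(G) is the sum of the orders of all elements of G. -/
noncomputable def lfun (G : Type*) [Group G] [Fintype G] : ℝ :=
  ((∏ g : G, orderOf g : ℕ) : ℝ) ^ ((1 : ℝ) / (Fintype.card G : ℝ)) / (Fintype.card G : ℝ)

noncomputable def psi2 (G : Type*) [Group G] [Fintype G] : ℝ :=
  ((∑ g : G, orderOf g : ℕ) : ℝ) / ((Fintype.card G : ℝ)) ^ 2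

/-!
If `g ^ m ∈ N` with `m` the order of `gN`, then `g ^ (m * |N|) = 1`, so `o(g) ≤ |N| · o(gN)`, strictly at
`g = 1` when `N ≠ 1`. Each coset has `|N|` elements, so summing gives `ψ(G) < |N|² ψ(G/N)`, and dividing
by `|G|² = |N|² |G/N|²` gives the claim.
-/

namespace QuotientGroup

variable {G : Type*} [Group G]

theorem orderOf_dvd_orderOf_mk_mul_card (N : Subgroup G) [N.Normal] (g : G) :
    orderOf g ∣ orderOf (g : G ⧸ N) * Nat.card N := by
  have hmem : g ^ orderOf (g : G ⧸ N) ∈ N := by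
    rw [← eq_one_iff, mk_pow, pow_orderOf_eq_one]
  apply orderOf_dvd_of_pow_eq_one
  rw [pow_mul]
  exact congrArg Subtype.val (pow_card_eq_one' (x := (⟨_, hmem⟩ : N)))

theorem sum_comp_mk {M : Type*} [Fintype G] [AddCommMonoid M] (N : Subgroup G)
    [Fintype (G ⧸ N)] (f : G ⧸ N → M) :
    ∑ g : G, f g = Nat.card N • ∑ q : G ⧸ N, f q := by
  classical
  rw [← Fintype.sum_fiberwise' (fun g : G => (g : G ⧸ N)) f, Finset.smul_sum]
  refine Finset.sum_congr rfl fun q _ => ?_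
  rw [Finset.sum_const, Finset.card_univ, ← Nat.card_eq_fintype_card]
  congr 1
  exact (card_preimage_mk N {q}).trans (by simp)

theorem sum_orderOf_lt_card_sq_mul_sum_orderOf_mk [Fintype G] (N : Subgroup G) [N.Normal]
    [Fintype (G ⧸ N)] (hN : N ≠ ⊥) :
    ∑ g : G, orderOf g < Nat.card N ^ 2 * ∑ q : G ⧸ N, orderOf q := by
  have hcard : 1 < Nat.card N := (Subgroup.one_lt_card_iff_ne_bot N).mpr hN
  have hle (g : G) : orderOf g ≤ orderOf (g : G ⧸ N) * Nat.card N :=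
    Nat.le_of_dvd (Nat.mul_pos (orderOf_pos _) Nat.card_pos)
      (orderOf_dvd_orderOf_mk_mul_card N g)
  calc ∑ g : G, orderOf g < ∑ g : G, orderOf (g : G ⧸ N) * Nat.card N :=
        Finset.sum_lt_sum (fun g _ => hle g) ⟨1, Finset.mem_univ _, by simpa using hcard⟩
    _ = Nat.card N ^ 2 * ∑ q : G ⧸ N, orderOf q := by
        rw [← Finset.sum_mul, sum_comp_mk N orderOf, smul_eq_mul]
        ring

end QuotientGroup

theorem stmt2_general (G : Type*) [Group G] [Fintype G] (N : Subgroup G) [N.Normal]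
    [Fintype (G ⧸ N)] (h1 : N ≠ ⊥) :
    psi2 G < psi2 (G ⧸ N) := by
  have hsum : ((∑ g : G, orderOf g : ℕ) : ℝ) <
      Nat.card N ^ 2 * ((∑ q : G ⧸ N, orderOf q : ℕ) : ℝ) := by
    exact_mod_cast QuotientGroup.sum_orderOf_lt_card_sq_mul_sum_orderOf_mk N h1
  have hcard : (Fintype.card G : ℝ) = Fintype.card (G ⧸ N) * Nat.card N := by
    simp only [← Nat.card_eq_fintype_card]
    exact_mod_cast Subgroup.card_eq_card_quotient_mul_card_subgroup N
  have hN : (0 : ℝ) < Nat.card N := by exact_mod_cast Nat.card_pos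
  calc psi2 G = ((∑ g : G, orderOf g : ℕ) : ℝ) / Nat.card N ^ 2 / Fintype.card (G ⧸ N) ^ 2 := by
        rw [psi2, hcard]; ring
    _ < psi2 (G ⧸ N) := by
        rw [psi2]
        gcongr
        rwa [div_lt_iff₀ (by positivity), mul_comm]

theorem stmt2 (G : Type*) [Group G] [Fintype G] (N : Subgroup G) [N.Normal]
    [Fintype (G ⧸ N)] (h1 : N ≠ ⊥) (h2 : N ≠ ⊤) :
    psi2 G < psi2 (G ⧸ N) :=
  stmt2_general G N h1
end

section
/- Let G be a finite group of order p^a q^b with p, q distinct primes and p odd. If l(G) > 2^{-1/2} · p^{-(p+1)/(2p)}, then G is nilpotent. Here l(G) = ρ(G)^(1/|G|)/|G| and ρ(G) is the product of the orders of all elements of G. -/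
/-!
Taking logarithms, `l(G) > l(D_{2p})` says `∑_g log [G : ⟨g⟩] < |G| λ` with
`λ = -log l(D_{2p})`, and `λ < log p` because `2 ^ p ≤ p ^ (p - 1)` for `p ≥ 3`. So some
cyclic subgroup `⟨g₀⟩` has index `< p`; as the number of Sylow `p`-subgroups is `≡ 1 [MOD p]`
and at most that index, the Sylow `p`-subgroup `P ≤ ⟨g₀⟩` is normal and cyclic. If `P` is
central, `G ⧸ P` is a `q`-group and `G` is nilpotent. Otherwise let `C = C_G(P)`. Conjugation
by `g` acts on `P` as `x ↦ x ^ m`; if `p ∣ o(g)`, then `g` centralises the subgroup of order `p`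
of `P`, so `m ≡ 1 [MOD p]`, while `g ^ [G : P] ∈ P` gives `m ^ [G : P] ≡ 1 [MOD |P|]`, whence
`m ≡ 1 [MOD |P|]` and `g ∈ C`. Hence `[G : ⟨g⟩]` is divisible by `|P|` for `g ∉ C`, by
`[G : C] ≥ 2` for `g ∈ C`, and by `|P| [G : C]` for `g` in a complement of `P` in `C`. Summing
the logarithms of these bounds gives at least `|G| λ` (with equality for `D_{2p}`), a
contradiction.
-/

open Subgroup

/-- `-log l(D_{2p})`. -/
noncomputable def logInvLDihedral (p : ℕ) : ℝ :=
  Real.log 2 / 2 + (p + 1) / (2 * p) * Real.log p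

theorem two_pow_le_pow_pred {p : ℕ} (hp : 3 ≤ p) : 2 ^ p ≤ p ^ (p - 1) := by
  obtain ⟨k, rfl⟩ := Nat.exists_eq_add_of_le' hp
  calc 2 ^ (k + 3) = 8 * 2 ^ k := by ring
    _ ≤ 9 * 3 ^ k := Nat.mul_le_mul (by norm_num) (Nat.pow_le_pow_left (by norm_num) k)
    _ = 3 ^ (k + 3 - 1) := by rw [show k + 3 - 1 = k + 2 by omega]; ring
    _ ≤ (k + 3) ^ (k + 3 - 1) := Nat.pow_le_pow_left (by omega) _

theorem mul_log_two_le_mul_log {p : ℕ} (hp : 3 ≤ p) :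
    p * Real.log 2 ≤ (p - 1) * Real.log p := by
  have h := Real.log_le_log (by positivity) (by exact_mod_cast two_pow_le_pow_pred hp :
    ((2 ^ p : ℕ) : ℝ) ≤ ((p ^ (p - 1) : ℕ) : ℝ))
  rwa [Nat.cast_pow, Nat.cast_pow, Real.log_pow, Real.log_pow, Nat.cast_sub (by omega),
    Nat.cast_ofNat, Nat.cast_one] at h

theorem logInvLDihedral_le_log {p : ℕ} (hp : 3 ≤ p) : logInvLDihedral p ≤ Real.log p := by
  have hp0 : (0 : ℝ) < p := by positivity
  rw [logInvLDihedral, show Real.log 2 / 2 + (p + 1) / (2 * p) * Real.log p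
    = (p * Real.log 2 + (p + 1) * Real.log p) / (2 * p) by field_simp,
    div_le_iff₀ (by positivity)]
  linarith [mul_log_two_le_mul_log hp]

theorem logInvLDihedral_le {p a : ℕ} (hp : 3 ≤ p) (ha : 1 ≤ a) {X : ℝ} (hX : 2 ≤ X) :
    logInvLDihedral p ≤ Real.log X / X + (1 - 1 / X) * Real.log (p ^ a)
      + Real.log (p ^ a) / (p ^ a * X) := by
  have hp0 : (0 : ℝ) < p := by positivity
  have hlogp : 0 ≤ Real.log p := Real.log_nonneg (by exact_mod_cast (by omega : 1 ≤ p))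
  have hlogX : Real.log 2 ≤ Real.log X := Real.log_le_log (by norm_num) hX
  rw [Real.log_pow]
  obtain rfl | ha2 := ha.eq_or_lt
  · -- equality holds at `X = 2`, the case of `D_{2p}`
    have key : Real.log X / X + (1 - 1 / X) * ((1 : ℕ) * Real.log p)
          + (1 : ℕ) * Real.log p / (p ^ 1 * X) - logInvLDihedral p
        = (((p - 1) * Real.log p - p * Real.log 2) * (X - 2)
          + 2 * p * (Real.log X - Real.log 2)) / (2 * p * X) := by
      unfold logInvLDihedral; field_simp; ring
    have hE := mul_nonneg (sub_nonneg.mpr (mul_log_two_le_mul_log hp)) (sub_nonneg.mpr hX)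
    have hL := mul_nonneg (by positivity : (0 : ℝ) ≤ 2 * p) (sub_nonneg.mpr hlogX)
    have := div_nonneg (add_nonneg hE hL) (by positivity : (0 : ℝ) ≤ 2 * p * X)
    linarith
  · have h2a : (2 : ℝ) ≤ a := by exact_mod_cast ha2
    have hX' : (1 : ℝ) / 2 ≤ 1 - 1 / X := by
      linarith [one_div_le_one_div_of_le (by norm_num) hX]
    have h1 : 0 ≤ Real.log X / X :=
      div_nonneg (hlogX.trans' (Real.log_nonneg (by norm_num))) (by linarith)
    have h2 : 0 ≤ a * Real.log p / (p ^ a * X) := div_nonneg (by positivity) (by positivity)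
    have h3 := mul_le_mul_of_nonneg_right hX' (by positivity : (0 : ℝ) ≤ a * Real.log p)
    nlinarith [logInvLDihedral_le_log hp]

theorem dvd_sub_one_of_dvd_pow_sub_one {p a k : ℕ} (hp : p.Prime) {m : ℤ} (hk : k.Coprime p)
    (hm : (p : ℤ) ∣ m - 1) (hmk : (p : ℤ) ^ a ∣ m ^ k - 1) : (p : ℤ) ^ a ∣ m - 1 := by
  obtain _ | a := a
  · simp
  have : NeZero (p ^ (a + 1)) := ⟨pow_ne_zero _ hp.ne_zero⟩
  have hcast (e : ℕ) :
      (p : ℤ) ^ (a + 1) ∣ m ^ e - 1 ↔ (m : ZMod (p ^ (a + 1))) ^ e = 1 := by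
    rw [← Nat.cast_pow, ← ZMod.intCast_zmod_eq_zero_iff_dvd, Int.cast_sub, Int.cast_pow,
      Int.cast_one, sub_eq_zero]
  have hpa : (p : ℤ) ^ (a + 1) ∣ m ^ p ^ a - 1 := by
    simpa using dvd_sub_pow_of_dvd_sub hm a
  have hmod : (m : ZMod (p ^ (a + 1))) = 1 :=
    (pow_eq_one_iff_of_coprime (hk.pow_right a)).mp ⟨(hcast k).mp hmk, (hcast _).mp hpa⟩
  simpa using (hcast 1).mpr (by rw [pow_one, hmod])

section GroupTheory

variable {G : Type*} [Group G]

theorem conj_pow_eq_zpow_pow {g x : G} {m : ℤ} (h : g * x * g⁻¹ = x ^ m) (k : ℕ) :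
    g ^ k * x * (g ^ k)⁻¹ = x ^ m ^ k := by
  induction k with
  | zero => simp
  | succ k ih =>
    calc g ^ (k + 1) * x * (g ^ (k + 1))⁻¹ = g ^ k * (g * x * g⁻¹) * (g ^ k)⁻¹ := by group
      _ = (g ^ k * x * (g ^ k)⁻¹) ^ m := by rw [h, conj_zpow]
      _ = x ^ m ^ (k + 1) := by rw [ih, ← zpow_mul, pow_succ]

theorem exists_conj_eq_zpow {P : Subgroup G} [P.Normal] [IsCyclic P] (g : G) :
    ∃ m : ℤ, ∀ x ∈ P, g * x * g⁻¹ = x ^ m := by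
  obtain ⟨m, hm⟩ := (MulAut.conjNormal g : MulAut P).toMonoidHom.map_cyclic
  exact ⟨m, fun x hx => by
    simpa [MulAut.conjNormal_apply] using congrArg Subtype.val (hm ⟨x, hx⟩)⟩

theorem mem_centralizer_of_commute_of_pow_mem {p a k : ℕ} (hp : p.Prime) {P : Subgroup G}
    [P.Normal] [IsCyclic P] (hcard : Nat.card P = p ^ a) {g u : G} (hk : k.Coprime p)
    (hgk : g ^ k ∈ centralizer P) (hu : u ∈ P) (hup : orderOf u = p) (hgu : Commute g u) :
    g ∈ centralizer P := by
  obtain ⟨m, hm⟩ := exists_conj_eq_zpow (P := P) g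
  obtain ⟨⟨w, hwP⟩, hw⟩ := IsCyclic.exists_generator (α := P)
  have hordw : orderOf w = p ^ a := by
    rw [← hcard, ← orderOf_eq_card_of_forall_mem_zpowers hw, Subgroup.orderOf_mk]
  have hm_mod_p : (p : ℤ) ∣ m - 1 := by
    rw [← hup, orderOf_dvd_iff_zpow_eq_one, zpow_sub_one, ← hm u hu, hgu.eq,
      mul_inv_cancel_right, mul_inv_cancel]
  have hmk : (p : ℤ) ^ a ∣ m ^ k - 1 := by
    have hfix : w ^ m ^ k = w := by
      rw [← conj_pow_eq_zpow_pow (hm w hwP), ← mem_centralizer_iff.mp hgk w hwP,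
        mul_inv_cancel_right]
    exact_mod_cast hordw ▸ orderOf_dvd_iff_zpow_eq_one.mpr
      (by rw [zpow_sub_one, hfix, mul_inv_cancel])
  have hm_mod_card : (Nat.card P : ℤ) ∣ m - 1 := by
    rw [hcard]
    exact_mod_cast dvd_sub_one_of_dvd_pow_sub_one hp hk hm_mod_p hmk
  refine mem_centralizer_iff.mpr fun x hx => ?_
  have hxm : x ^ m = x := by
    rw [← mul_inv_eq_one, ← zpow_sub_one, ← orderOf_dvd_iff_zpow_eq_one]
    exact (Int.natCast_dvd_natCast.mpr (Subgroup.orderOf_dvd_natCard P hx)).trans hm_mod_card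
  rw [eq_comm, ← mul_inv_eq_iff_eq_mul, hm x hx, hxm]

theorem exists_le_index_eq_card_mul_index [Finite G] {P C : Subgroup G} [P.Normal] (hPC : P ≤ C)
    (hcop : (Nat.card P).Coprime P.index) : ∃ Q ≤ C, Q.index = Nat.card P * C.index := by
  have hcard : Nat.card (P.subgroupOf C) = Nat.card P :=
    Nat.card_congr (subgroupOfEquivOfLe hPC).toEquiv
  obtain ⟨K, hK⟩ := exists_right_complement'_of_coprime
    (hcard ▸ hcop.coprime_dvd_right (relIndex_dvd_index_of_le hPC) :
      (Nat.card (P.subgroupOf C)).Coprime (P.subgroupOf C).index)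
  exact ⟨K.map C.subtype, map_subtype_le K, by rw [index_map_subtype, hK.index_eq_card, hcard]⟩

theorem isNilpotent_of_le_center {q : ℕ} [Fact q.Prime] [Finite G] {N : Subgroup G} [N.Normal]
    (hN : N ≤ center G) (hq : IsPGroup q (G ⧸ N)) : Group.IsNilpotent G :=
  have := hq.isNilpotent
  Subgroup.isNilpotent_of_ker_le_center (QuotientGroup.mk' N) (by rwa [QuotientGroup.ker_mk'])

namespace Sylow

variable {p : ℕ} [Fact p.Prime]

theorem exists_le_of_not_dvd_index [Finite G] {H : Subgroup G} (hH : ¬ p ∣ H.index) :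
    ∃ P : Sylow p G, (P : Subgroup G) ≤ H := by
  let Q₀ : Sylow p H := Sylow.nonempty.some
  have hQ : ¬ p ∣ (Q₀.map H.subtype).index := by
    rw [index_map_subtype]
    exact Nat.Prime.not_dvd_mul Fact.out Q₀.not_dvd_index hH
  exact ⟨(Q₀.2.map H.subtype).toSylow hQ, map_subtype_le _⟩

theorem normal_of_index_normalizer_lt [Finite G] (P : Sylow p G)
    (hP : (normalizer (P : Set G)).index < p) : (P : Subgroup G).Normal := by
  have h := card_sylow_modEq_one p G
  rw [P.card_eq_index_normalizer, Nat.ModEq, Nat.mod_eq_of_lt hP,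
    Nat.mod_eq_of_lt (Fact.out : p.Prime).one_lt] at h
  exact normalizer_eq_top_iff.mp (index_eq_one.mp h)

theorem exists_normal_le_zpowers_of_index_lt [Finite G] {g : G} (hg : (zpowers g).index < p) :
    ∃ P : Sylow p G, (P : Subgroup G).Normal ∧ (P : Subgroup G) ≤ zpowers g := by
  have hnd : ¬ p ∣ (zpowers g).index :=
    Nat.not_dvd_of_pos_of_lt (Nat.pos_of_ne_zero index_ne_zero_of_finite) hg
  obtain ⟨P, hP⟩ := exists_le_of_not_dvd_index hnd
  refine ⟨P, P.normal_of_index_normalizer_lt (lt_of_le_of_lt (index_antitone ?_) hg), hP⟩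
  exact ((le_centralizer _).trans (centralizer_le hP)).trans (centralizer_le_normalizer _)

theorem mem_centralizer_of_dvd_orderOf [Finite G] (P : Sylow p G) [(P : Subgroup G).Normal]
    [IsCyclic P] {g : G} (hg : p ∣ orderOf g) : g ∈ centralizer (P : Set G) := by
  obtain ⟨a, ha⟩ := P.isPGroup'.exists_card_eq
  have hu : orderOf (g ^ (orderOf g / p)) = p :=
    orderOf_pow_orderOf_div (orderOf_pos g).ne' hg
  have huP : g ^ (orderOf g / p) ∈ P := by
    have hpg : IsPGroup p (zpowers (g ^ (orderOf g / p))) :=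
      IsPGroup.of_card (n := 1) (by rw [Nat.card_zpowers, hu, pow_one])
    obtain ⟨Q, hQ⟩ := hpg.exists_le_sylow
    have := unique_of_normal P inferInstance
    exact Subsingleton.elim Q P ▸ hQ (mem_zpowers _)
  have hk : P.index.Coprime p :=
    ((Nat.Prime.coprime_iff_not_dvd Fact.out).mpr P.not_dvd_index).symm
  exact mem_centralizer_of_commute_of_pow_mem Fact.out ha hk
    (le_centralizer (P : Subgroup G) (pow_index_mem _ g)) huP hu (Commute.self_pow g _)

theorem isPGroup_quotient [Finite G] {q a b : ℕ} (P : Sylow p G) [(P : Subgroup G).Normal]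
    (hcard : Nat.card G = p ^ a * q ^ b) : IsPGroup q (G ⧸ (P : Subgroup G)) := by
  refine IsPGroup.of_card_dvd_pow (n := b) ?_
  rw [← index_eq_card]
  refine (Nat.Coprime.pow_right a ((Nat.Prime.coprime_iff_not_dvd Fact.out).mpr
    P.not_dvd_index).symm).dvd_of_dvd_mul_left ?_
  rw [← hcard]
  exact index_dvd_card _

end Sylow

end GroupTheory

section IndexSums

theorem Real.log_natCast_le_of_dvd {m n : ℕ} (h : m ∣ n) (hn : n ≠ 0) :
    Real.log m ≤ Real.log n :=
  Real.log_le_log (Nat.cast_pos.mpr (Nat.pos_of_dvd_of_pos h (Nat.pos_of_ne_zero hn)))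
    (Nat.cast_le.mpr (Nat.le_of_dvd (Nat.pos_of_ne_zero hn) h))

variable {G : Type*} [Group G]

open scoped Classical in
theorem sum_ite_mem_subgroup [Fintype G] (H : Subgroup G) (x y : ℝ) :
    ∑ g : G, (if g ∈ H then x else y) = Nat.card H * x + (Nat.card G - Nat.card H) * y := by
  have hH : (Finset.univ.filter (· ∈ H)).card = Nat.card H := by
    rw [Nat.card_eq_fintype_card, Fintype.card_subtype]
  have hcompl := Finset.card_filter_add_card_filter_not (s := Finset.univ) (· ∈ H)
  rw [Finset.sum_ite, Finset.sum_const, Finset.sum_const, nsmul_eq_mul, nsmul_eq_mul, hH]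
  rw [Finset.card_univ, hH, ← Nat.card_eq_fintype_card] at hcompl
  rw [← hcompl]
  push_cast
  ring

open scoped Classical in
theorem ite_le_log_index_zpowers [Finite G] {P C Q : Subgroup G} (hQC : Q ≤ C)
    (hQ : Q.index = Nat.card P * C.index) (hout : ∀ g ∉ C, Nat.card P ∣ (zpowers g).index)
    (g : G) :
    (if g ∈ C then Real.log C.index else Real.log (Nat.card P)) +
      (if g ∈ Q then Real.log (Nat.card P) else 0) ≤ Real.log (zpowers g).index := by
  have hidx : (zpowers g).index ≠ 0 := index_ne_zero_of_finite
  by_cases hgQ : g ∈ Q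
  · rw [if_pos (hQC hgQ), if_pos hgQ, add_comm, ← Real.log_mul
      (Nat.cast_ne_zero.mpr Nat.card_pos.ne') (Nat.cast_ne_zero.mpr index_ne_zero_of_finite),
      ← Nat.cast_mul, ← hQ]
    exact Real.log_natCast_le_of_dvd (index_dvd_of_le (zpowers_le.mpr hgQ)) hidx
  by_cases hgC : g ∈ C
  · rw [if_pos hgC, if_neg hgQ, add_zero]
    exact Real.log_natCast_le_of_dvd (index_dvd_of_le (zpowers_le.mpr hgC)) hidx
  · rw [if_neg hgC, if_neg hgQ, add_zero]
    exact Real.log_natCast_le_of_dvd (hout g hgC) hidx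

theorem card_mul_le_sum_log_index_zpowers [Fintype G] {P C Q : Subgroup G} (hQC : Q ≤ C)
    (hQ : Q.index = Nat.card P * C.index) (hout : ∀ g ∉ C, Nat.card P ∣ (zpowers g).index) :
    Nat.card G * (Real.log C.index / C.index + (1 - 1 / C.index) * Real.log (Nat.card P)
      + Real.log (Nat.card P) / (Nat.card P * C.index)) ≤
      ∑ g : G, Real.log (zpowers g).index := by
  classical
  have hX : (C.index : ℝ) ≠ 0 := Nat.cast_ne_zero.mpr index_ne_zero_of_finite
  have hY : (Nat.card P : ℝ) ≠ 0 := Nat.cast_ne_zero.mpr Nat.card_pos.ne'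
  have hC : (Nat.card C : ℝ) = Nat.card G / C.index := by
    rw [← card_mul_index C]; push_cast; field_simp
  have hQ' : (Nat.card Q : ℝ) = Nat.card G / (Nat.card P * C.index) := by
    rw [← card_mul_index Q, hQ]; push_cast; field_simp
  calc _ = ∑ g : G, ((if g ∈ C then Real.log C.index else Real.log (Nat.card P)) +
        (if g ∈ Q then Real.log (Nat.card P) else 0)) := by
        rw [Finset.sum_add_distrib, sum_ite_mem_subgroup, sum_ite_mem_subgroup, hC, hQ']
        field_simp
        ring
    _ ≤ _ := Finset.sum_le_sum fun g _ => ite_le_log_index_zpowers hQC hQ hout g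

theorem log_lfun [Fintype G] :
    Real.log (lfun G) = -(∑ g : G, Real.log (zpowers g).index) / Fintype.card G := by
  have hn : (0 : ℝ) < Fintype.card G := by exact_mod_cast Fintype.card_pos
  have horder (g : G) : Real.log (orderOf g) =
      Real.log (Fintype.card G) - Real.log (zpowers g).index := by
    rw [eq_sub_iff_add_eq, ← Real.log_mul (Nat.cast_ne_zero.mpr (orderOf_pos g).ne')
      (Nat.cast_ne_zero.mpr index_ne_zero_of_finite), ← Nat.cast_mul, ← Nat.card_zpowers,
      card_mul_index, Nat.card_eq_fintype_card]
  have hρ : (0 : ℝ) < ((∏ g : G, orderOf g : ℕ) : ℝ) :=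
    Nat.cast_pos.mpr (Finset.prod_pos fun g _ => orderOf_pos g)
  rw [lfun, Real.log_div (Real.rpow_pos_of_pos hρ _).ne' hn.ne', Real.log_rpow hρ, Nat.cast_prod,
    Real.log_prod fun g _ => Nat.cast_ne_zero.mpr (orderOf_pos g).ne']
  simp only [horder, Finset.sum_sub_distrib, Finset.sum_const, Finset.card_univ, nsmul_eq_mul]
  field_simp
  ring

theorem sum_log_index_lt_of_lfun_gt [Fintype G] {p : ℕ} (hp : 0 < p)
    (hl : lfun G > (2 : ℝ) ^ (-(1 / 2 : ℝ)) * (p : ℝ) ^ (-(((p : ℝ) + 1) / (2 * (p : ℝ))))) :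
    ∑ g : G, Real.log (zpowers g).index < Fintype.card G * logInvLDihedral p := by
  have hp0 : (0 : ℝ) < p := Nat.cast_pos.mpr hp
  have hn : (0 : ℝ) < Fintype.card G := by exact_mod_cast Fintype.card_pos
  have hbound : Real.log ((2 : ℝ) ^ (-(1 / 2 : ℝ)) *
      (p : ℝ) ^ (-(((p : ℝ) + 1) / (2 * (p : ℝ))))) = -logInvLDihedral p := by
    rw [Real.log_mul (by positivity) (by positivity), Real.log_rpow (by norm_num),
      Real.log_rpow hp0, logInvLDihedral]
    ring
  have h := Real.log_lt_log (by positivity) hl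
  rw [hbound, log_lfun, neg_div, neg_lt_neg_iff, div_lt_iff₀ hn] at h
  linarith

theorem Sylow.card_mul_logInvLDihedral_le_sum_log_index [Fintype G] {p : ℕ} [Fact p.Prime]
    (hp : 3 ≤ p) (P : Sylow p G) [(P : Subgroup G).Normal] [IsCyclic P]
    (hC : centralizer (P : Set G) ≠ ⊤) :
    Fintype.card G * logInvLDihedral p ≤ ∑ g : G, Real.log (zpowers g).index := by
  obtain ⟨a, ha⟩ := P.isPGroup'.exists_card_eq
  have hcop {n : ℕ} (hn : ¬ p ∣ n) : (Nat.card P).Coprime n :=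
    ha ▸ ((Nat.Prime.coprime_iff_not_dvd Fact.out).mpr hn).pow_left a
  have hout (g : G) (hg : g ∉ centralizer (P : Set G)) : Nat.card P ∣ (zpowers g).index := by
    refine (hcop (mt P.mem_centralizer_of_dvd_orderOf hg)).dvd_of_dvd_mul_left ?_
    rw [← Nat.card_zpowers, card_mul_index]
    exact card_subgroup_dvd_card _
  obtain ⟨Q, hQC, hQ⟩ := exists_le_index_eq_card_mul_index (le_centralizer (P : Subgroup G))
    (hcop P.not_dvd_index)
  have hX : (2 : ℝ) ≤ (centralizer (P : Set G)).index := by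
    have := index_ne_zero_of_finite (H := centralizer (P : Set G))
    have := mt index_eq_one.mp hC
    exact_mod_cast (by omega : 2 ≤ (centralizer (P : Set G)).index)
  have ha1 : 1 ≤ a := by
    refine Nat.one_le_iff_ne_zero.mpr fun ha0 => hC ?_
    rw [ha0, pow_zero, card_eq_one] at ha
    change centralizer ((P : Subgroup G) : Set G) = ⊤
    simp [ha]
  have hsum := card_mul_le_sum_log_index_zpowers hQC hQ hout
  rw [ha, Nat.card_eq_fintype_card] at hsum
  push_cast at hsum
  exact (mul_le_mul_of_nonneg_left (logInvLDihedral_le hp ha1 hX) (Nat.cast_nonneg _)).trans hsum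

end IndexSums

theorem stmt18_general (G : Type*) [Group G] [Fintype G] (p q a b : ℕ) (hp : p.Prime) (hq : q.Prime)
    (hpodd : p ≠ 2) (hcard : Fintype.card G = p ^ a * q ^ b)
    (hl : lfun G > (2 : ℝ) ^ (-(1 / 2 : ℝ)) * (p : ℝ) ^ (-(((p : ℝ) + 1) / (2 * (p : ℝ))))) :
    Group.IsNilpotent G := by
  have : Fact p.Prime := ⟨hp⟩
  have : Fact q.Prime := ⟨hq⟩
  have hp3 : 3 ≤ p := by have := hp.two_le; omega
  have hsum := sum_log_index_lt_of_lfun_gt hp.pos hl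
  obtain ⟨g, hg⟩ : ∃ g : G, (zpowers g).index < p := by
    by_contra! h
    refine hsum.not_ge ?_
    calc Fintype.card G * logInvLDihedral p ≤ Fintype.card G * Real.log p :=
          mul_le_mul_of_nonneg_left (logInvLDihedral_le_log hp3) (Nat.cast_nonneg _)
      _ = ∑ _g : G, Real.log p := by simp
      _ ≤ ∑ g : G, Real.log (zpowers g).index := Finset.sum_le_sum fun g _ =>
          Real.log_le_log (Nat.cast_pos.mpr hp.pos) (Nat.cast_le.mpr (h g))
  obtain ⟨P, hPn, hPg⟩ := Sylow.exists_normal_le_zpowers_of_index_lt hg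
  have : IsCyclic P := Subgroup.isCyclic_of_le hPg
  by_contra hnil
  refine hsum.not_ge (P.card_mul_logInvLDihedral_le_sum_log_index hp3 fun hC => hnil ?_)
  exact isNilpotent_of_le_center (centralizer_eq_top_iff_subset.mp hC)
    (P.isPGroup_quotient (Nat.card_eq_fintype_card.trans hcard))

theorem stmt18 (G : Type*) [Group G] [Fintype G] (p q a b : ℕ) (hp : p.Prime) (hq : q.Prime)
    (hne : p ≠ q) (hpodd : p ≠ 2) (hcard : Fintype.card G = p ^ a * q ^ b)
    (hl : lfun G > (2 : ℝ) ^ (-(1 / 2 : ℝ)) * (p : ℝ) ^ (-(((p : ℝ) + 1) / (2 * (p : ℝ))))) :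
    Group.IsNilpotent G :=
  stmt18_general G p q a b hp hq hpodd hcard hl
end
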